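/- arXiv:1109.3015 — 4 statements merged into one kernel-verified Lean document; each statement's English description precedes it below -/
import Mathlib

section
/- The group G = Q8 ×_{Z/2} D8 is generated by its symplectic reflections; in fact, the ten elements {±(I,ρ), ±(J,ρ), ±(K,ρ), ±(Id,σ), ±(Id,σρ)} generate G. -/
/-!
Since `(Id,σ)(Id,σρ) = (Id,ρ)`, the lifts `(I,ρ), (J,ρ), (Id,σ), (Id,σρ)` to `Q₈ × D₈` also give
`(I,Id)` and `(J,Id)`; as `I, J` generate `Q₈` and `ρ, σ` generate `D₈`, they generate `Q₈ × D₈`,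
so their images generate `G`. Each of the ten listed elements squares into the centre `{±Id}`
without lying in it, so all of them are symplectic reflections.
-/

open QuaternionGroup DihedralGroup

abbrev Q8 := QuaternionGroup 2
abbrev D8 := DihedralGroup 4

/-- The central element `(-Id, -Id)` of `Q₈ × D₈`. -/
def zEl : Q8 × D8 := (a 2, r 2)

/-- The order-2 central subgroup generated by `(-Id, -Id)`. -/
def Zc : Subgroup (Q8 × D8) where
  carrier := {1, zEl}
  one_mem' := Or.inl rfl
  mul_mem' := by
    rintro x y (rfl | rfl) (rfl | rfl) <;>
      simp only [Set.mem_insert_iff, Set.mem_singleton_iff] <;>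
      first | (left; decide) | (right; decide)
  inv_mem' := by
    rintro x (rfl | rfl) <;>
      simp only [Set.mem_insert_iff, Set.mem_singleton_iff] <;>
      first | (left; decide) | (right; decide)

instance : Zc.Normal := by
  constructor
  intro x hx g
  have hx' : x = 1 ∨ x = zEl := hx
  rcases hx' with rfl | rfl
  · simpa using Zc.one_mem
  · have h : g * zEl * g⁻¹ = zEl := by revert g; decide
    rw [h]
    exact Or.inr rfl

instance : DecidablePred (· ∈ Zc) := fun x =>
  decidable_of_iff (x = 1 ∨ x = zEl) Iff.rfl

/-- The central product `G = Q₈ ×_{ℤ/2} D₈`, the quotient of `Q₈ × D₈` by the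
central subgroup generated by `(-Id, -Id)`. -/
abbrev G32 := (Q8 × D8) ⧸ Zc

/-- The central element `-Id` of `G = Q₈ ×_{ℤ/2} D₈`. -/
def negId : G32 := QuotientGroup.mk (a 2, 1)

/-- The symplectic reflections of `G = Q₈ ×_{ℤ/2} D₈`: its noncentral involutions. -/
def reflSet : Set G32 := {g | g ^ 2 = 1 ∧ g ≠ 1 ∧ g ≠ negId}

namespace QuaternionGroup

theorem closure_a_one_xa_zero (n : ℕ) [NeZero n] :
    Subgroup.closure ({a 1, xa 0} : Set (QuaternionGroup n)) = ⊤ := by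
  have ha (i : ZMod (2 * n)) : a i ∈ Subgroup.closure ({a 1, xa 0} : Set (QuaternionGroup n)) := by
    rw [← ZMod.natCast_zmod_val i, ← a_one_pow]
    exact pow_mem (Subgroup.subset_closure (by simp)) _
  rw [Subgroup.eq_top_iff']
  rintro (i | i)
  · exact ha i
  · rw [← zero_add i, ← xa_mul_a]
    exact mul_mem (Subgroup.subset_closure (by simp)) (ha i)

end QuaternionGroup

namespace DihedralGroup

theorem closure_r_one_sr_zero (n : ℕ) [NeZero n] :
    Subgroup.closure ({r 1, sr 0} : Set (DihedralGroup n)) = ⊤ := by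
  have hr (i : ZMod n) : r i ∈ Subgroup.closure ({r 1, sr 0} : Set (DihedralGroup n)) := by
    rw [← ZMod.natCast_zmod_val i, ← r_one_pow]
    exact pow_mem (Subgroup.subset_closure (by simp)) _
  rw [Subgroup.eq_top_iff']
  rintro (i | i)
  · exact hr i
  · rw [← zero_add i, ← sr_mul_r]
    exact mul_mem (Subgroup.subset_closure (by simp)) (hr i)

end DihedralGroup

theorem Subgroup.eq_top_of_closure_eq_top_of_inl_inr_mem {G N : Type*} [Group G] [Group N]
    (H : Subgroup (G × N)) {s : Set G} {t : Set N}
    (hs : Subgroup.closure s = ⊤) (ht : Subgroup.closure t = ⊤)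
    (hsH : ∀ x ∈ s, (x, 1) ∈ H) (htH : ∀ y ∈ t, (1, y) ∈ H) : H = ⊤ := by
  rw [eq_top_iff, ← top_prod_top, prod_le_iff, ← hs, ← ht, MonoidHom.map_closure,
    MonoidHom.map_closure, closure_le, closure_le]
  constructor
  · rintro _ ⟨x, hx, rfl⟩
    exact hsH x hx
  · rintro _ ⟨y, hy, rfl⟩
    exact htH y hy

theorem QuotientGroup.closure_image_mk_eq_top {G : Type*} [Group G] (N : Subgroup G) [N.Normal]
    {s : Set G} (hs : Subgroup.closure s = ⊤) :
    Subgroup.closure ((↑) '' s : Set (G ⧸ N)) = ⊤ := by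
  rw [← QuotientGroup.coe_mk', ← MonoidHom.map_closure, hs,
    Subgroup.map_top_of_surjective _ (QuotientGroup.mk'_surjective N)]

/- In Mathlib's presentations `a 1 = I`, `xa 0 = J`, `r 1 = ρ`, `sr 0 = σ` and `sr 1 = σρ`. -/
theorem closure_IRho_JRho_sigma_sigmaRho_eq_top :
    Subgroup.closure ({(a 1, r 1), (xa 0, r 1), (1, sr 0), (1, sr 1)} : Set (Q8 × D8)) = ⊤ := by
  set H := Subgroup.closure ({(a 1, r 1), (xa 0, r 1), (1, sr 0), (1, sr 1)} : Set (Q8 × D8))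
  have hσ : ((1 : Q8), sr 0) ∈ H := Subgroup.subset_closure (by simp)
  have hρ : ((1 : Q8), r 1) ∈ H := by
    have hσρ : ((1 : Q8), sr 1) ∈ H := Subgroup.subset_closure (by simp)
    simpa using mul_mem hσ hσρ
  have hI : (a 1, (1 : D8)) ∈ H := by
    have hIρ : (a 1, r 1) ∈ H := Subgroup.subset_closure (by simp)
    simpa using mul_mem hIρ (inv_mem hρ)
  have hJ : (xa 0, (1 : D8)) ∈ H := by
    have hJρ : (xa 0, r 1) ∈ H := Subgroup.subset_closure (by simp)
    simpa using mul_mem hJρ (inv_mem hρ)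
  refine H.eq_top_of_closure_eq_top_of_inl_inr_mem (closure_a_one_xa_zero 2)
    (closure_r_one_sr_zero 4) ?_ ?_
  · simpa using ⟨hI, hJ⟩
  · simpa using ⟨hρ, hσ⟩

theorem mk_mem_reflSet_iff (x : Q8 × D8) :
    (x : G32) ∈ reflSet ↔ x ^ 2 ∈ Zc ∧ x ∉ Zc ∧ x⁻¹ * (a 2, 1) ∉ Zc := by
  rw [reflSet, Set.mem_ofPred_eq, ← QuotientGroup.mk_pow, Ne, Ne, negId, QuotientGroup.eq,
    QuotientGroup.eq_one_iff, QuotientGroup.eq_one_iff]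

theorem negId_mul_mk (x : Q8 × D8) : negId * (x : G32) = ((a 2, 1) * x : Q8 × D8) := rfl

/-- `G = Q₈ ×_{ℤ/2} D₈` is generated by its symplectic reflections
(= noncentral involutions); in fact, the ten elements
`±(I,ρ), ±(J,ρ), ±(K,ρ), ±(Id,σ), ±(Id,σρ)` generate `G`. -/
theorem generated_by_symplectic_reflections :
    Subgroup.closure reflSet = ⊤ ∧
    Subgroup.closure ({QuotientGroup.mk (a 1, r 1), negId * QuotientGroup.mk (a 1, r 1),
      QuotientGroup.mk (xa 0, r 1), negId * QuotientGroup.mk (xa 0, r 1),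
      QuotientGroup.mk (xa 1, r 1), negId * QuotientGroup.mk (xa 1, r 1),
      QuotientGroup.mk (1, sr 0), negId * QuotientGroup.mk (1, sr 0),
      QuotientGroup.mk (1, sr 1), negId * QuotientGroup.mk (1, sr 1)} : Set G32) = ⊤ := by
  refine ⟨eq_top_mono (Subgroup.closure_mono ?_) ?gen, ?gen⟩
  · simp only [Set.insert_subset_iff, Set.singleton_subset_iff, negId_mul_mk, mk_mem_reflSet_iff]
    decide
  · exact eq_top_mono (Subgroup.closure_mono (by simp [Set.insert_subset_iff]))
      (QuotientGroup.closure_image_mk_eq_top Zc closure_IRho_JRho_sigma_sigmaRho_eq_top)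
end

section
/- Any automorphism of G = Q8 ×_{Z/2} D8 that fixes each of the five conjugacy classes of noncentral involutions (i.e., maps each class to itself setwise) is an inner automorphism. -/
open QuaternionGroup DihedralGroup

/-!
The involutions `(I, ρ)`, `(J, ρ)`, `(Id, σ)`, `(Id, σρ)` generate `G`, and each is conjugate
only to itself and its negative, so a class-preserving automorphism multiplies each of them by a
sign. Conjugation by `g` multiplies a generator `t` by the central sign `[g, t]`; the map
`g ↦ ([g, tᵢ])ᵢ` is a homomorphism onto `{±1}⁴`, its kernel being `Z(G)` of order 2. Hence some
inner automorphism produces the same signs, and it agrees with the given one on generators.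
-/

/- `QuotientGroup.leftRelDecidable` is defined through `rw`, which blocks kernel reduction;
these instances make `decide` work on `G32`. -/
instance decidableRelLeftRelZc : DecidableRel (QuotientGroup.leftRel Zc).r := fun p q =>
  decidable_of_iff (p⁻¹ * q ∈ Zc) QuotientGroup.leftRel_apply.symm

instance : DecidableEq G32 := @Quotient.decidableEq _ _ decidableRelLeftRelZc

instance : Fintype G32 := @Quotient.fintype _ _ _ decidableRelLeftRelZc

theorem MulAut.mem_range_conj_of_eqOn {H : Type*} [Group H] {s : Set H}
    (hs : Subgroup.closure s = ⊤) {f : MulAut H} {g : H} (h : s.EqOn (MulAut.conj g) f) :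
    f ∈ (MulAut.conj : H →* MulAut H).range :=
  ⟨g, MulEquiv.toMonoidHom_injective (MonoidHom.eq_of_eqOn_dense hs h)⟩

def genInvolution : Fin 4 → G32
  | 0 => QuotientGroup.mk (a 1, r 1)
  | 1 => QuotientGroup.mk (xa 0, r 1)
  | 2 => QuotientGroup.mk (1, sr 0)
  | 3 => QuotientGroup.mk (1, sr 1)

theorem genInvolution_sq (i : Fin 4) : genInvolution i ^ 2 = 1 := by
  revert i; decide

theorem genInvolution_ne_one (i : Fin 4) : genInvolution i ≠ 1 := by
  revert i; decide

theorem genInvolution_not_mem_center (i : Fin 4) : genInvolution i ∉ Subgroup.center G32 := by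
  simp only [Subgroup.mem_center_iff]; revert i; decide

theorem isConj_genInvolution_iff (i : Fin 4) (y : G32) :
    IsConj (genInvolution i) y ↔ y = genInvolution i ∨ y = negId * genInvolution i := by
  revert i y; decide

theorem exists_genInvolution_normal_form (g : G32) : ∃ (i : Fin 4) (j k l : Fin 2),
    (genInvolution 2 * genInvolution 3) ^ (i : ℕ) * genInvolution 0 ^ (j : ℕ) *
      genInvolution 1 ^ (k : ℕ) * genInvolution 2 ^ (l : ℕ) = g := by
  revert g; decide

theorem closure_range_genInvolution : Subgroup.closure (Set.range genInvolution) = ⊤ := by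
  have mem (i : Fin 4) : genInvolution i ∈ Subgroup.closure (Set.range genInvolution) :=
    Subgroup.subset_closure ⟨i, rfl⟩
  refine eq_top_iff.2 fun g _ => ?_
  obtain ⟨i, j, k, l, rfl⟩ := exists_genInvolution_normal_form g
  exact mul_mem (mul_mem (mul_mem (pow_mem (mul_mem (mem 2) (mem 3)) _) (pow_mem (mem 0) _))
    (pow_mem (mem 1) _)) (pow_mem (mem 2) _)

theorem exists_conj_eq_signed_genInvolution (s : Fin 4 → Bool) : ∃ g : G32, ∀ i,
    g * genInvolution i * g⁻¹ = if s i then genInvolution i else negId * genInvolution i := by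
  revert s; decide

theorem exists_conj_eq_of_isConj_genInvolution (φ : Fin 4 → G32)
    (hφ : ∀ i, IsConj (genInvolution i) (φ i)) :
    ∃ g : G32, ∀ i, MulAut.conj g (genInvolution i) = φ i := by
  obtain ⟨g, hg⟩ := exists_conj_eq_signed_genInvolution fun i => decide (φ i = genInvolution i)
  refine ⟨g, fun i => ?_⟩
  rw [MulAut.conj_apply, hg]
  split_ifs with h
  · exact (of_decide_eq_true h).symm
  · have h' : φ i ≠ genInvolution i := fun h' => h (decide_eq_true h')
    exact (((isConj_genInvolution_iff i _).1 (hφ i)).resolve_left h').symm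

/-- any automorphism of `G = Q₈ ×_{ℤ/2} D₈` fixing each of the five
conjugacy classes of noncentral involutions setwise (i.e. sending every noncentral
involution to a conjugate of itself) is inner. -/
theorem class_preserving_automorphism_is_inner :
    ∀ f : MulAut G32,
      (∀ g : G32, g ^ 2 = 1 → g ≠ 1 → g ∉ Subgroup.center G32 → IsConj g (f g)) →
      f ∈ (MulAut.conj : G32 →* MulAut G32).range := by
  intro f hf
  obtain ⟨g, hg⟩ := exists_conj_eq_of_isConj_genInvolution (fun i => f (genInvolution i)) fun i =>
    hf _ (genInvolution_sq i) (genInvolution_ne_one i) (genInvolution_not_mem_center i)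
  refine MulAut.mem_range_conj_of_eqOn (g := g) closure_range_genInvolution ?_
  rintro _ ⟨i, rfl⟩
  exact hg i
end

section
/- For every symplectic reflection s in G = Q8 ×_{Z/2} D8, the stabilizer in G of a generic point of the fixed plane V^s ⊂ C^4 is exactly the order-2 subgroup ⟨s⟩; more precisely, if p ∈ G fixes all of V^s then p ∈ {Id, s}. -/
/-!
Since `s * s = 1`, the fixed plane `V^s` is spanned by the columns of `s + 1`, so `p` fixes
`V^s` pointwise iff `p * (s + 1) = s + 1`. Both `Q₈` and `D₈` are defined over `ℤ[i]`, and
over `ℤ[i]` the statement becomes a finite, decidable check on the 32 elements of `G`: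
`rank (s - 1) = 2` gives `s ≠ 1` and `det (s - 1) = 0`, and for each such `s` (a symplectic
reflection) one checks `s * s = 1` and that only `1` and `s` satisfy `p * (s + 1) = s + 1`.
-/

open Matrix Kronecker

noncomputable section

/-- The matrix `I` of the quaternion group `Q₈ < SL₂(ℂ)`. -/
def Iq : Matrix (Fin 2) (Fin 2) ℂ := !![Complex.I, 0; 0, -Complex.I]
/-- The matrix `J` of the quaternion group `Q₈ < SL₂(ℂ)`. -/
def Jq : Matrix (Fin 2) (Fin 2) ℂ := !![0, -1; 1, 0]
/-- The matrix `K` of the quaternion group `Q₈ < SL₂(ℂ)`. -/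
def Kq : Matrix (Fin 2) (Fin 2) ℂ := !![0, -Complex.I; -Complex.I, 0]
/-- The rotation `ρ` of the dihedral group `D₈ < O₂(ℂ)`. -/
def ρm : Matrix (Fin 2) (Fin 2) ℂ := !![0, -1; 1, 0]
/-- The reflection `σ` of the dihedral group `D₈ < O₂(ℂ)`. -/
def σm : Matrix (Fin 2) (Fin 2) ℂ := !![0, 1; 1, 0]

/-- The quaternion group `Q₈` realized as a matrix group (as a submonoid; it is
a group since all its elements are invertible matrices). -/
def Qcl : Submonoid (Matrix (Fin 2) (Fin 2) ℂ) := Submonoid.closure {Iq, Jq, Kq}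
/-- The dihedral group `D₈` realized as a matrix group. -/
def Dcl : Submonoid (Matrix (Fin 2) (Fin 2) ℂ) := Submonoid.closure {ρm, σm}

theorem Matrix.mul_add_one_eq_add_one_of_fixedPoints {n R : Type*} [Fintype n] [DecidableEq n]
    [CommRing R] {s p : Matrix n n R} (hs : s * s = 1)
    (hfix : ∀ v, s *ᵥ v = v → p *ᵥ v = v) : p * (s + 1) = s + 1 := by
  have hcol : s * (s + 1) = s + 1 := by rw [mul_add, hs, mul_one, add_comm]
  refine Matrix.ext_iff_mulVec.2 fun v => ?_
  rw [← mulVec_mulVec]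
  exact hfix _ (by rw [mulVec_mulVec, hcol])

theorem Matrix.ne_zero_and_det_eq_zero_of_rank {n K : Type*} [Fintype n] [DecidableEq n]
    [Field K] {A : Matrix n n K} (h0 : 0 < A.rank) (hn : A.rank < Fintype.card n) :
    A ≠ 0 ∧ A.det = 0 := by
  refine ⟨by rintro rfl; simp at h0, by_contra fun hdet => ?_⟩
  rw [rank_of_isUnit A ((isUnit_iff_isUnit_det A).2 (Ne.isUnit hdet))] at hn
  exact hn.false

theorem Matrix.ne_zero_and_det_eq_zero_of_rank_map {n R K : Type*} [Fintype n] [DecidableEq n]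
    [CommRing R] [Field K] {f : R →+* K} (hf : Function.Injective f) {A : Matrix n n R}
    (h0 : 0 < (f.mapMatrix A).rank) (hn : (f.mapMatrix A).rank < Fintype.card n) :
    A ≠ 0 ∧ A.det = 0 := by
  obtain ⟨hA, hdet⟩ := ne_zero_and_det_eq_zero_of_rank h0 hn
  refine ⟨by rintro rfl; simp at hA, hf ?_⟩
  rw [RingHom.map_det, hdet, map_zero]

theorem Submonoid.closure_subset_of_mul_mem {M : Type*} [Monoid M] {S L : Set M} (hS : S ⊆ L)
    (h1 : (1 : M) ∈ L) (hmul : ∀ a ∈ L, ∀ b ∈ L, a * b ∈ L) : (closure S : Set M) ⊆ L :=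
  closure_le (S := ⟨⟨L, fun ha hb => hmul _ ha _ hb⟩, h1⟩).2 hS

theorem RingHom.mapMatrix_kronecker {α β : Type*} [CommRing α] [CommRing β] (f : α →+* β)
    {m n : Type*} [Fintype m] [DecidableEq m] [Fintype n] [DecidableEq n]
    (A : Matrix m m α) (B : Matrix n n α) :
    f.mapMatrix A ⊗ₖ f.mapMatrix B = f.mapMatrix (A ⊗ₖ B) := by
  ext; simp [kroneckerMap_apply]

open GaussianInt

def Iz : Matrix (Fin 2) (Fin 2) GaussianInt := !![Zsqrtd.sqrtd, 0; 0, -Zsqrtd.sqrtd]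
def Jz : Matrix (Fin 2) (Fin 2) GaussianInt := !![0, -1; 1, 0]
def Kz : Matrix (Fin 2) (Fin 2) GaussianInt := !![0, -Zsqrtd.sqrtd; -Zsqrtd.sqrtd, 0]
def ρz : Matrix (Fin 2) (Fin 2) GaussianInt := !![0, -1; 1, 0]
def σz : Matrix (Fin 2) (Fin 2) GaussianInt := !![0, 1; 1, 0]

def Q8z : List (Matrix (Fin 2) (Fin 2) GaussianInt) := [1, -1, Iz, -Iz, Jz, -Jz, Kz, -Kz]
def D8z : List (Matrix (Fin 2) (Fin 2) GaussianInt) :=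
  [1, -1, ρz, -ρz, σz, -σz, ρz * σz, -(ρz * σz)]
-- Each element of `G` occurs twice, as `g ⊗ₖ h = (-g) ⊗ₖ (-h)`.
def Gz : List (Matrix (Fin 2 × Fin 2) (Fin 2 × Fin 2) GaussianInt) :=
  Q8z.flatMap fun g => D8z.map (g ⊗ₖ ·)

theorem Q8z_mul_mem : ∀ a ∈ Q8z, ∀ b ∈ Q8z, a * b ∈ Q8z := by decide

theorem D8z_mul_mem : ∀ a ∈ D8z, ∀ b ∈ D8z, a * b ∈ D8z := by decide

theorem Qcl_eq_map_closure :
    Qcl = (Submonoid.closure {Iz, Jz, Kz}).map toComplex.mapMatrix := by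
  rw [MonoidHom.map_mclosure]
  simp only [Set.image_insert_eq, Set.image_singleton, Qcl]
  congr <;> ext i j <;> fin_cases i <;> fin_cases j <;>
    simp [Iq, Jq, Kq, Iz, Jz, Kz, toComplex_def]

theorem Dcl_eq_map_closure : Dcl = (Submonoid.closure {ρz, σz}).map toComplex.mapMatrix := by
  rw [MonoidHom.map_mclosure]
  simp only [Set.image_insert_eq, Set.image_singleton, Dcl]
  congr <;> ext i j <;> fin_cases i <;> fin_cases j <;> simp [ρm, σm, ρz, σz]

theorem exists_mem_Q8z_of_mem_Qcl {g : Matrix (Fin 2) (Fin 2) ℂ} (hg : g ∈ Qcl) :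
    ∃ a ∈ Q8z, toComplex.mapMatrix a = g := by
  rw [Qcl_eq_map_closure] at hg
  obtain ⟨a, ha, rfl⟩ := Submonoid.mem_map.1 hg
  refine ⟨a, Submonoid.closure_subset_of_mul_mem (L := {a | a ∈ Q8z}) ?_ (by decide)
    Q8z_mul_mem ha, rfl⟩
  simp only [Set.insert_subset_iff, Set.singleton_subset_iff, Set.mem_ofPred_eq]
  decide

theorem exists_mem_D8z_of_mem_Dcl {h : Matrix (Fin 2) (Fin 2) ℂ} (hh : h ∈ Dcl) :
    ∃ b ∈ D8z, toComplex.mapMatrix b = h := by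
  rw [Dcl_eq_map_closure] at hh
  obtain ⟨b, hb, rfl⟩ := Submonoid.mem_map.1 hh
  refine ⟨b, Submonoid.closure_subset_of_mul_mem (L := {b | b ∈ D8z}) ?_ (by decide)
    D8z_mul_mem hb, rfl⟩
  simp only [Set.insert_subset_iff, Set.singleton_subset_iff, Set.mem_ofPred_eq]
  decide

theorem exists_mem_Gz_map_eq_kronecker {g h : Matrix (Fin 2) (Fin 2) ℂ} (hg : g ∈ Qcl)
    (hh : h ∈ Dcl) :
    ∃ s ∈ Gz, toComplex.mapMatrix s = g ⊗ₖ h := by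
  obtain ⟨a, ha, rfl⟩ := exists_mem_Q8z_of_mem_Qcl hg
  obtain ⟨b, hb, rfl⟩ := exists_mem_D8z_of_mem_Dcl hh
  exact ⟨a ⊗ₖ b, List.mem_flatMap.2 ⟨a, ha, List.mem_map_of_mem hb⟩,
    (RingHom.mapMatrix_kronecker _ a b).symm⟩

theorem mul_self_eq_one_of_mem_Gz : ∀ s ∈ Gz, s ≠ 1 → (s - 1).det = 0 → s * s = 1 := by
  decide +kernel

theorem eq_one_or_eq_of_mem_Gz : ∀ s ∈ Gz, s ≠ 1 → (s - 1).det = 0 →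
    ∀ p ∈ Gz, p * (s + 1) = s + 1 → p = 1 ∨ p = s := by decide +kernel

/-- for every symplectic reflection `s = g ⊗ₖ h` in
`G = Q₈ ×_{ℤ/2} D₈`, the subgroup of elements of `G` fixing the plane
`V^s ⊂ ℂ⁴` pointwise is exactly `⟨s⟩ = {Id, s}`: if `p = g' ⊗ₖ h'` fixes all of
`V^s` then `p ∈ {Id, s}`. -/
theorem generic_stabilizer_of_reflection_plane :
    ∀ g ∈ Qcl, ∀ h ∈ Dcl, (g ⊗ₖ h - 1).rank = 2 →
      ∀ g' ∈ Qcl, ∀ h' ∈ Dcl,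
        (∀ v : Fin 2 × Fin 2 → ℂ, (g ⊗ₖ h).mulVec v = v → (g' ⊗ₖ h').mulVec v = v) →
        (g' ⊗ₖ h' = 1 ∨ g' ⊗ₖ h' = g ⊗ₖ h) := by
  intro g hg h hh hrank g' hg' h' hh' hfix
  obtain ⟨s, hs, hsgh⟩ := exists_mem_Gz_map_eq_kronecker hg hh
  obtain ⟨p, hp, hpgh⟩ := exists_mem_Gz_map_eq_kronecker hg' hh'
  rw [← hsgh, ← hpgh] at hfix ⊢
  rw [← hsgh, ← map_one toComplex.mapMatrix, ← map_sub] at hrank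
  obtain ⟨hs1, hdet⟩ := Matrix.ne_zero_and_det_eq_zero_of_rank_map toComplex_injective
    (by rw [hrank]; norm_num) (by rw [hrank]; simp)
  have hss := mul_self_eq_one_of_mem_Gz s hs (sub_ne_zero.1 hs1) hdet
  have hinj : Function.Injective
      (toComplex.mapMatrix : Matrix (Fin 2 × Fin 2) (Fin 2 × Fin 2) GaussianInt → _) :=
    Matrix.map_injective toComplex_injective
  have hps : p * (s + 1) = s + 1 := hinj <| by
    simpa only [map_mul, map_add, map_one] using
      Matrix.mul_add_one_eq_add_one_of_fixedPoints (by rw [← map_mul, hss, map_one]) hfix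
  rcases eq_one_or_eq_of_mem_Gz s hs (sub_ne_zero.1 hs1) hdet p hp hps with rfl | rfl
  · exact Or.inl (map_one _)
  · exact Or.inr rfl
end
end

section
/- In G = Q8 ×_{Z/2} D8, every element h ∉ {Id, −Id} that is not a symplectic reflection can be written as a product h = g·s of two distinct symplectic reflections g, s ∈ G. -/
open QuaternionGroup DihedralGroup

/-- A symplectic reflection of `G = Q₈ ×_{ℤ/2} D₈`: a noncentral involution. -/
def IsSymplRefl (g : G32) : Prop := g ^ 2 = 1 ∧ g ≠ 1 ∧ g ≠ negId

/-! If a symplectic reflection `g` inverts `h`, i.e. `(g * h) ^ 2 = 1`, then `h = g * (g * h)`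
is a product of two involutions. When `h` is not an involution, `g * h` can be neither `1` nor
the central involution `-Id` (otherwise `h = g⁻¹ * (g * h)` would square to `1`), so it is a
symplectic reflection, and it differs from `g` because `h ≠ 1`. That every non-involution of `G`
is inverted by some symplectic reflection is a finite check on lifts to `Q₈ × D₈`. -/

theorem mul_ne_of_sq_ne_one {G : Type*} [Group G] {g h z : G} (hg : g ^ 2 = 1)
    (hgz : Commute g z) (hz : z ^ 2 = 1) (hh : h ^ 2 ≠ 1) : g * h ≠ z := by
  intro hgh
  apply hh
  rw [eq_inv_mul_of_mul_eq hgh, hgz.inv_left.mul_pow, inv_pow, hg, hz, inv_one, one_mul]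

theorem commute_negId (g : G32) : Commute g negId := by
  obtain ⟨x, rfl⟩ := QuotientGroup.mk_surjective g
  have hx : x * (a 2, 1) = (a 2, 1) * x := by revert x; decide
  exact congrArg QuotientGroup.mk hx

theorem negId_sq : negId ^ 2 = 1 := by
  rw [negId, ← QuotientGroup.mk_pow, QuotientGroup.eq_one_iff]
  decide

theorem isSymplRefl_mk_iff (x : Q8 × D8) :
    IsSymplRefl (x : G32) ↔ x ^ 2 ∈ Zc ∧ x ∉ Zc ∧ x⁻¹ * (a 2, 1) ∉ Zc := by
  simp only [IsSymplRefl, negId, ← QuotientGroup.mk_pow, QuotientGroup.eq_one_iff, Ne,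
    QuotientGroup.eq]

theorem exists_isSymplRefl_sq_mul_eq_one {h : G32} (hh : h ^ 2 ≠ 1) :
    ∃ g : G32, IsSymplRefl g ∧ (g * h) ^ 2 = 1 := by
  obtain ⟨x, rfl⟩ := QuotientGroup.mk_surjective h
  have hlift : ∀ x : Q8 × D8, x ^ 2 ∉ Zc →
      ∃ y : Q8 × D8, (y ^ 2 ∈ Zc ∧ y ∉ Zc ∧ y⁻¹ * (a 2, 1) ∉ Zc) ∧ (y * x) ^ 2 ∈ Zc := by
    decide
  rw [← QuotientGroup.mk_pow, Ne, QuotientGroup.eq_one_iff] at hh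
  obtain ⟨y, hy, hyx⟩ := hlift x hh
  exact ⟨y, (isSymplRefl_mk_iff y).2 hy, (QuotientGroup.eq_one_iff _).2 hyx⟩

/-- every element `h ∉ {Id, -Id}` of `G = Q₈ ×_{ℤ/2} D₈` that is not
a symplectic reflection is a product `h = g·s` of two distinct symplectic
reflections. -/
theorem nonreflection_is_product_of_two_reflections :
    ∀ h : G32, h ≠ 1 → h ≠ negId → ¬ IsSymplRefl h →
      ∃ g s : G32, IsSymplRefl g ∧ IsSymplRefl s ∧ g ≠ s ∧ h = g * s := by
  intro h h1 hneg hrefl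
  have hh : h ^ 2 ≠ 1 := fun hsq => hrefl ⟨hsq, h1, hneg⟩
  obtain ⟨g, hg, hgh⟩ := exists_isSymplRefl_sq_mul_eq_one hh
  refine ⟨g, g * h, hg, ⟨hgh, mul_ne_of_sq_ne_one hg.1 (Commute.one_right g) (one_pow 2) hh,
    mul_ne_of_sq_ne_one hg.1 (commute_negId g) negId_sq hh⟩, ?_, ?_⟩
  · rwa [Ne, left_eq_mul]
  · rw [← mul_assoc, ← sq, hg.1, one_mul]
end
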